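/- Inclusion of Hölder balls in weak Hölder classes: for every β = 1+α with α ∈ (0,1], every z0 ∈ (0,1) and every δ ∈ (0,1), one has H(δ^{-1}, δ, β) ⊂ U_{z0,δ}. -/

import Mathlib

/-! Subtracting the tangent line at `z0`, the mean value theorem applied to `S t - t S'(z0)` and the
Hölder bound on `S'` give `|S (z0 + t) - S z0 - t S'(z0)| ≤ δ |t| ^ β`. The tangent term is odd in
`u`, so it integrates to zero over `[-1, 1]`, leaving
`|∫ (S (z0 + h u) - S z0) du| ≤ δ h ^ β ∫ |u| ^ β du = 2 δ h ^ β / (β + 1) ≤ δ h ^ β` as `β ≥ 1`. -/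

open MeasureTheory ProbabilityTheory Real Filter Set
open scoped ENNReal NNReal

noncomputable section

/-- The sup-norm of a function over the interval `[0,1]`. -/
def supNorm01 (f : ℝ → ℝ) : ℝ := ⨆ x : Icc (0:ℝ) 1, |f x.1|

/-- The Hölder class `H(M,K,β)` of `C¹` functions on `[0,1]` with `‖S'‖ ≤ M` and
`|S'(y) - S'(x)| ≤ K |x-y|^(β-1)`. -/
def holderClass (β M K : ℝ) : Set (ℝ → ℝ) :=
  {S | ContDiff ℝ 1 S ∧ (∀ x ∈ Icc (0:ℝ) 1, |deriv S x| ≤ M) ∧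
    ∀ x ∈ Icc (0:ℝ) 1, ∀ y ∈ Icc (0:ℝ) 1, |deriv S y - deriv S x| ≤ K * |x - y| ^ (β - 1)}

/-- The local weak Hölder class `U_{z0,δ}`. -/
def weakHolderClass (β z0 δ : ℝ) : Set (ℝ → ℝ) :=
  {S | (∃ M > 0, ∃ K > 0, S ∈ holderClass β M K) ∧
    (∀ x ∈ Icc (0:ℝ) 1, |deriv S x| ≤ δ⁻¹) ∧
    ∀ h > 0, 0 ≤ z0 - h → z0 + h ≤ 1 →
      |∫ u in (-1:ℝ)..1, (S (z0 + h * u) - S z0)| ≤ δ * h ^ β}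

/-- The design points `x_k = k/n`, `k = 1, …, n`, indexed by `Fin n`. -/
def xk (n : ℕ) (k : Fin n) : ℝ := ((k : ℕ) + 1 : ℝ) / n

/-- The normalizing rate `φ_n = n^(β/(2β+1))`. -/
def rate (β : ℝ) (n : ℕ) : ℝ := (n : ℝ) ^ (β / (2 * β + 1))

/-- The bandwidth `h = n^(-1/(2β+1))`. -/
def bw (β : ℝ) (n : ℕ) : ℝ := (n : ℝ) ^ (-(1 : ℝ) / (2 * β + 1))

/-- The kernel `Q = 𝟙_{[-1,1]}`. -/
def Qker (u : ℝ) : ℝ := if u ∈ Icc (-1 : ℝ) 1 then 1 else 0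

/-- `q_n = ∑_{k=1}^n Q((x_k - z0)/h)`. -/
def qn (β z0 : ℝ) (n : ℕ) : ℝ := ∑ k : Fin n, Qker ((xk n k - z0) / bw β n)

/-- The kernel estimator `Ŝ_n(z0)`. -/
def kernelEst (β z0 : ℝ) (n : ℕ) (y : Fin n → ℝ) : ℝ :=
  (qn β z0 n)⁻¹ * ∑ k : Fin n, Qker ((xk n k - z0) / bw β n) * y k

/-- Assumption (A2): `g` is bounded away from `0` and `∞`, uniformly in `x ∈ [0,1]` and
`S ∈ C¹([0,1],ℝ)`. -/
def boundedAssumption (g : ℝ → (ℝ → ℝ) → ℝ) (gstar gsup : ℝ) : Prop :=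
  0 < gstar ∧ gstar ≤ gsup ∧
    ∀ x ∈ Icc (0:ℝ) 1, ∀ S : ℝ → ℝ, ContDiff ℝ 1 S → gstar ≤ g x S ∧ g x S ≤ gsup

/-- Assumptions (A3)-(A4): `g` is Fréchet differentiable in `S`, uniformly in `x ∈ [0,1]`;
the derivative `L_{x,S0}` is linear and bounded uniformly in `x`, and the remainder
`Γ_{x,S0}(f) = g(x,S0+f) - g(x,S0) - L_{x,S0}(f)` is `o(‖f‖)` uniformly in `x`. -/
def frechetAssumption (g : ℝ → (ℝ → ℝ) → ℝ) : Prop :=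
  ∀ S0 : ℝ → ℝ, ContDiff ℝ 1 S0 →
    ∃ L : ℝ → (ℝ → ℝ) → ℝ, (∀ x ∈ Icc (0:ℝ) 1, IsLinearMap ℝ (L x)) ∧
      (∃ C : ℝ, ∀ x ∈ Icc (0:ℝ) 1, ∀ f : ℝ → ℝ, |L x f| ≤ C * supNorm01 f) ∧
      ∀ ε > 0, ∃ η > 0, ∀ f : ℝ → ℝ, ContDiff ℝ 1 f → 0 < supNorm01 f → supNorm01 f ≤ η →
        ∀ x ∈ Icc (0:ℝ) 1, |g x (S0 + f) - g x S0 - L x f| ≤ ε * supNorm01 f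

/-- Assumption (A1). -/
def kernelVarAssumption (g : ℝ → (ℝ → ℝ) → ℝ) (β z0 δ : ℝ) : Prop :=
  ∀ ε > 0, ∃ N : ℕ, ∀ n ≥ N, ∀ S ∈ weakHolderClass β z0 δ,
    |Real.sqrt ((qn β z0 n)⁻¹ *
        ∑ k : Fin n, Qker ((xk n k - z0) / bw β n) * (g (xk n k) S) ^ 2) - g z0 S| ≤ ε

/-- The law of the observations `(y_1,…,y_n)`, `y_k = S(x_k) + g(x_k,S) ξ_k`,
with `ξ_k` i.i.d. standard Gaussian: the product of the measures `N(S(x_k), g(x_k,S)²)`. -/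
def gaussModel (g : ℝ → (ℝ → ℝ) → ℝ) (S : ℝ → ℝ) (n : ℕ) : Measure (Fin n → ℝ) :=
  Measure.pi fun k => gaussianReal (S (xk n k)) (Real.toNNReal ((g (xk n k) S) ^ 2))

/-- The risk `R_{z0,δ}(S̃) = sup_{S ∈ U_{z0,δ}} E_S[φ_n |S̃ - S(z0)| / g(z0,S)]`. -/
def gaussRisk (g : ℝ → (ℝ → ℝ) → ℝ) (β z0 δ : ℝ) (n : ℕ) (T : (Fin n → ℝ) → ℝ) : ℝ≥0∞ :=
  ⨆ S ∈ weakHolderClass β z0 δ,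
    ∫⁻ y, ENNReal.ofReal (rate β n * |T y - S z0| / g z0 S) ∂(gaussModel g S n)

/-- `E|ξ|` for `ξ ~ N(0,1)`. -/
def absMomentStdGauss : ℝ := ∫ x, |x| ∂(gaussianReal 0 1)

theorem abs_sub_sub_mul_deriv_le_of_holder {f : ℝ → ℝ} {x y K α : ℝ} (hK : 0 ≤ K) (hα : 0 ≤ α)
    (hf : ∀ z ∈ uIcc x y, DifferentiableAt ℝ f z)
    (hH : ∀ z ∈ uIcc x y, |deriv f z - deriv f x| ≤ K * |z - x| ^ α) :
    |f y - f x - (y - x) * deriv f x| ≤ K * |y - x| ^ (1 + α) := by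
  have hg : ∀ z ∈ uIcc x y, HasDerivWithinAt (fun z => f z - z * deriv f x)
      (deriv f z - deriv f x) (uIcc x y) z := fun z hz =>
    ((hf z hz).hasDerivAt.sub (hasDerivAt_mul_const _)).hasDerivWithinAt
  have hbound : ∀ z ∈ uIcc x y, ‖deriv f z - deriv f x‖ ≤ K * |y - x| ^ α := fun z hz =>
    (hH z hz).trans <| mul_le_mul_of_nonneg_left
      (rpow_le_rpow (abs_nonneg _) (abs_sub_left_of_mem_uIcc hz) hα) hK
  calc |f y - f x - (y - x) * deriv f x|
      = ‖(f y - y * deriv f x) - (f x - x * deriv f x)‖ := by rw [Real.norm_eq_abs]; ring_nf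
    _ ≤ K * |y - x| ^ α * ‖y - x‖ :=
      (convex_uIcc x y).norm_image_sub_le_of_norm_hasDerivWithin_le hg hbound
        left_mem_uIcc right_mem_uIcc
    _ = K * |y - x| ^ (1 + α) := by
      rw [Real.norm_eq_abs, rpow_add' (abs_nonneg _) (by linarith), rpow_one]; ring

theorem abs_sub_sub_mul_deriv_le_of_mem_holderClass {S : ℝ → ℝ} {β M K x y : ℝ}
    (hS : S ∈ holderClass β M K) (hβ : 1 ≤ β) (hK : 0 ≤ K)
    (hx : x ∈ Icc (0:ℝ) 1) (hy : y ∈ Icc (0:ℝ) 1) :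
    |S y - S x - (y - x) * deriv S x| ≤ K * |y - x| ^ β := by
  have hseg : uIcc x y ⊆ Icc (0:ℝ) 1 := ordConnected_Icc.uIcc_subset hx hy
  simpa using abs_sub_sub_mul_deriv_le_of_holder hK (sub_nonneg.2 hβ)
    (fun z _ => (hS.1.differentiable one_ne_zero).differentiableAt)
    (fun z hz => by simpa only [abs_sub_comm z x] using hS.2.2 x hx z (hseg hz))

theorem integral_abs_rpow_neg_one_one {r : ℝ} (hr : 0 ≤ r) :
    ∫ u in (-1:ℝ)..1, |u| ^ r = 2 / (r + 1) := by
  have hcont : Continuous fun u : ℝ => |u| ^ r := continuous_abs.rpow_const fun _ => Or.inr hr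
  have hright : ∫ u in (0:ℝ)..1, |u| ^ r = 1 / (r + 1) := by
    rw [intervalIntegral.integral_congr (g := fun u : ℝ => u ^ r) fun u hu => by
      rw [uIcc_of_le zero_le_one] at hu
      simp only [abs_of_nonneg hu.1]]
    rw [integral_rpow (Or.inl (by linarith)), one_rpow, zero_rpow (by linarith), sub_zero]
  have hleft : ∫ u in (-1:ℝ)..0, |u| ^ r = 1 / (r + 1) := by
    simpa only [abs_neg, neg_zero, neg_neg, hright] using
      (intervalIntegral.integral_comp_neg (a := 0) (b := 1) fun u : ℝ => |u| ^ r).symm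
  rw [← intervalIntegral.integral_add_adjacent_intervals (b := 0)
    (hcont.intervalIntegrable _ _) (hcont.intervalIntegrable _ _), hleft, hright]
  ring

theorem abs_integral_sub_le_of_tangent_bound {f : ℝ → ℝ} {z h d K β : ℝ} (hf : Continuous f)
    (hβ : 0 ≤ β) (hh : 0 ≤ h) (hT : ∀ t ∈ Icc (-h) h, |f (z + t) - f z - t * d| ≤ K * |t| ^ β) :
    |∫ u in (-1:ℝ)..1, (f (z + h * u) - f z)| ≤ 2 / (β + 1) * K * h ^ β := by
  have hcomp : Continuous fun u => f (z + h * u) - f z := by fun_prop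
  have hlin : Continuous fun u : ℝ => h * u * d := by fun_prop
  have hodd : ∫ u in (-1:ℝ)..1, h * u * d = 0 := by
    simp_rw [mul_comm h, mul_assoc]
    rw [intervalIntegral.integral_mul_const, integral_id]
    norm_num
  have hrem : ∫ u in (-1:ℝ)..1, (f (z + h * u) - f z)
      = ∫ u in (-1:ℝ)..1, (f (z + h * u) - f z - h * u * d) := by
    rw [intervalIntegral.integral_sub (hcomp.intervalIntegrable _ _)
      (hlin.intervalIntegrable _ _), hodd, sub_zero]
  have hpoint : ∀ u ∈ Icc (-1:ℝ) 1,
      |f (z + h * u) - f z - h * u * d| ≤ K * h ^ β * |u| ^ β := fun u hu => by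
    have hu : |u| ≤ 1 := abs_le.2 hu
    have hhu : h * u ∈ Icc (-h) h := abs_le.1 (by rw [abs_mul, abs_of_nonneg hh]; nlinarith)
    calc _ ≤ K * |h * u| ^ β := hT _ hhu
      _ = K * h ^ β * |u| ^ β := by
        rw [abs_mul, abs_of_nonneg hh, mul_rpow hh (abs_nonneg u)]; ring
  calc |∫ u in (-1:ℝ)..1, (f (z + h * u) - f z)|
      ≤ ∫ u in (-1:ℝ)..1, |f (z + h * u) - f z - h * u * d| := by
        rw [hrem]; exact intervalIntegral.abs_integral_le_integral_abs (by norm_num)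
    _ ≤ ∫ u in (-1:ℝ)..1, K * h ^ β * |u| ^ β :=
        intervalIntegral.integral_mono_on (by norm_num)
          ((hcomp.sub hlin).abs.intervalIntegrable _ _)
          ((continuous_abs.rpow_const fun _ => Or.inr hβ).const_mul _ |>.intervalIntegrable _ _)
          hpoint
    _ = 2 / (β + 1) * K * h ^ β := by
        rw [intervalIntegral.integral_const_mul, integral_abs_rpow_neg_one_one hβ]; ring

theorem holder_ball_subset_weakHolder_general
    (α β z0 δ : ℝ) (hα0 : 0 < α) (hβ : β = 1 + α)
    (hδ : δ ∈ Ioo (0:ℝ) 1) :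
    holderClass β δ⁻¹ δ ⊆ weakHolderClass β z0 δ := by
  intro S hS
  refine ⟨⟨δ⁻¹, inv_pos.2 hδ.1, δ, hδ.1, hS⟩, hS.2.1, fun h hh hl hr => ?_⟩
  have hβ1 : 1 ≤ β := by linarith
  have hz0 : z0 ∈ Icc (0:ℝ) 1 := ⟨by linarith, by linarith⟩
  have htaylor : ∀ t ∈ Icc (-h) h, |S (z0 + t) - S z0 - t * deriv S z0| ≤ δ * |t| ^ β :=
    fun t ht => by
      simpa using abs_sub_sub_mul_deriv_le_of_mem_holderClass hS hβ1 hδ.1.le hz0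
        (y := z0 + t) ⟨by linarith [ht.1], by linarith [ht.2]⟩
  have hconst : 2 / (β + 1) ≤ 1 := (div_le_one (by linarith)).2 (by linarith)
  calc _ ≤ 2 / (β + 1) * δ * h ^ β :=
        abs_integral_sub_le_of_tangent_bound hS.1.continuous (by linarith) hh.le htaylor
    _ ≤ δ * h ^ β := by
        rw [mul_assoc]; exact mul_le_of_le_one_left (by have := hδ.1; positivity) hconst

/-- inclusion of Hölder balls in weak Hölder classes:
`H(δ⁻¹, δ, β) ⊆ U_{z0,δ}` for every `β = 1 + α`, `α ∈ (0,1]`, `z0 ∈ (0,1)`, `δ ∈ (0,1)`. -/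
theorem holder_ball_subset_weakHolder
    (α β z0 δ : ℝ) (hα0 : 0 < α) (hα1 : α ≤ 1) (hβ : β = 1 + α)
    (hz0 : z0 ∈ Ioo (0:ℝ) 1) (hδ : δ ∈ Ioo (0:ℝ) 1) :
    holderClass β δ⁻¹ δ ⊆ weakHolderClass β z0 δ :=
  holder_ball_subset_weakHolder_general α β z0 δ hα0 hβ hδ
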